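/- Let B ∈ B(H) and let 0 ≤ α ≤ 1. Then w(B)⁴ ≤ ((1+α)/8)·‖|B|⁴ + |B*|⁴‖ + ((1−α)/4)·w(B²)² + (1/4)·‖|B|² + |B*|²‖·w(B²). -/

import Mathlib

/-!
Buzano's inequality `|⟪a, e⟫ ⟪e, b⟫| ≤ (‖a‖ ‖b‖ + |⟪a, b⟫|) / 2` for a unit vector `e`, applied
to `a = B x`, `b = B* x`, `e = x`, gives `|⟪B x, x⟫|² ≤ (‖B x‖ ‖B* x‖ + |⟪B² x, x⟫|) / 2`, hence
`w(B)² ≤ ‖|B|² + |B*|²‖ / 4 + w(B²) / 2`. Squaring and using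
`‖|B|² + |B*|²‖² ≤ 2 ‖|B|⁴ + |B*|⁴‖` (as `(X + Y)² ≤ 2 (X² + Y²)` for self-adjoint `X`, `Y`) gives
the case `α = 0`. The remaining term `α (‖|B|⁴ + |B*|⁴‖ / 8 - w(B²)² / 4)` is nonnegative because
`w(B²) ≤ ‖|B|² + |B*|²‖ / 2`, again by `|⟪B² x, x⟫| = |⟪B x, B* x⟫| ≤ ‖B x‖ ‖B* x‖`.
-/

open ContinuousLinearMap

variable {H : Type*} [NormedAddCommGroup H] [InnerProductSpace ℂ H] [CompleteSpace H]

/-- The numerical radius of a bounded linear operator: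
`w(T) = sup { |⟨Tx, x⟩| : ‖x‖ = 1 }`. -/
noncomputable def numRadius {E : Type*} [NormedAddCommGroup E] [InnerProductSpace ℂ E]
    (T : E →L[ℂ] E) : ℝ :=
  sSup {r : ℝ | ∃ x : E, ‖x‖ = 1 ∧ r = ‖(inner ℂ (T x) x : ℂ)‖}

/-- The absolute value `|T| = (T*T)^(1/2)` of a bounded linear operator.
Note `opAbs (adjoint T) = (T T*)^(1/2) = |T*|`. -/
noncomputable def opAbs (T : H →L[ℂ] H) : H →L[ℂ] H := CFC.sqrt (adjoint T * T)

/-- The off-diagonal operator matrix `[[0, B], [C, 0]]` acting on `H ⊕ H`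
(with the Hilbert space structure `WithLp 2 (H × H)`) by `(x₁, x₂) ↦ (B x₂, C x₁)`. -/
noncomputable def offDiag (B C : H →L[ℂ] H) :
    WithLp 2 (H × H) →L[ℂ] WithLp 2 (H × H) :=
  ((WithLp.prodContinuousLinearEquiv 2 ℂ H H).symm : (H × H) →L[ℂ] WithLp 2 (H × H)).comp
    (((B.comp (ContinuousLinearMap.snd ℂ H H)).prod
        (C.comp (ContinuousLinearMap.fst ℂ H H))).comp
      ((WithLp.prodContinuousLinearEquiv 2 ℂ H H) : WithLp 2 (H × H) →L[ℂ] H × H))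

open scoped InnerProductSpace

section Buzano

variable {𝕜 E : Type*} [RCLike 𝕜] [NormedAddCommGroup E] [InnerProductSpace 𝕜 E]

/-- Buzano's inequality. -/
theorem norm_inner_mul_inner_le_of_norm_eq_one (a b : E) {e : E} (he : ‖e‖ = 1) :
    ‖⟪a, e⟫_𝕜 * ⟪e, b⟫_𝕜‖ ≤ (‖a‖ * ‖b‖ + ‖⟪a, b⟫_𝕜‖) / 2 := by
  -- Reflecting `a` in the line `𝕜 ∙ e` preserves its norm and adds `2 ⟪a, e⟫ ⟪e, b⟫` to `⟪a, b⟫`.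
  set R := (𝕜 ∙ e).reflection
  have hR : ⟪R a, b⟫_𝕜 + ⟪a, b⟫_𝕜 = 2 * (⟪a, e⟫_𝕜 * ⟪e, b⟫_𝕜) := by
    rw [Submodule.reflection_apply, Submodule.starProjection_unit_singleton 𝕜 he, two_smul,
      inner_sub_left, inner_add_left, inner_smul_left, inner_conj_symm]
    ring
  have h := calc
    2 * ‖⟪a, e⟫_𝕜 * ⟪e, b⟫_𝕜‖ = ‖⟪R a, b⟫_𝕜 + ⟪a, b⟫_𝕜‖ := by rw [hR, norm_mul]; simp
    _ ≤ ‖R a‖ * ‖b‖ + ‖⟪a, b⟫_𝕜‖ :=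
      (norm_add_le _ _).trans (by gcongr; exact norm_inner_le_norm _ _)
    _ = ‖a‖ * ‖b‖ + ‖⟪a, b⟫_𝕜‖ := by rw [LinearIsometryEquiv.norm_map]
  linarith

end Buzano

section NumRadius

variable {E : Type*} [NormedAddCommGroup E] [InnerProductSpace ℂ E]

theorem norm_inner_apply_self_le_opNorm (T : E →L[ℂ] E) {x : E} (hx : ‖x‖ = 1) :
    ‖⟪T x, x⟫_ℂ‖ ≤ ‖T‖ :=
  calc ‖⟪T x, x⟫_ℂ‖ ≤ ‖T x‖ * ‖x‖ := norm_inner_le_norm _ _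
    _ ≤ ‖T‖ * ‖x‖ * ‖x‖ := by gcongr; exact T.le_opNorm x
    _ = ‖T‖ := by rw [hx, mul_one, mul_one]

theorem norm_inner_apply_self_le_numRadius (T : E →L[ℂ] E) {x : E} (hx : ‖x‖ = 1) :
    ‖⟪T x, x⟫_ℂ‖ ≤ numRadius T :=
  le_csSup ⟨‖T‖, by rintro r ⟨y, hy, rfl⟩; exact norm_inner_apply_self_le_opNorm T hy⟩ ⟨x, hx, rfl⟩

theorem numRadius_nonneg (T : E →L[ℂ] E) : 0 ≤ numRadius T :=
  Real.sSup_nonneg (by rintro r ⟨x, -, rfl⟩; exact norm_nonneg _)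

theorem numRadius_le_of_forall {T : E →L[ℂ] E} {c : ℝ} (hc : 0 ≤ c)
    (h : ∀ x : E, ‖x‖ = 1 → ‖⟪T x, x⟫_ℂ‖ ≤ c) : numRadius T ≤ c :=
  Real.sSup_le (by rintro r ⟨x, hx, rfl⟩; exact h x hx) hc

end NumRadius

theorem IsSelfAdjoint.norm_add_sq_le {A : Type*} [CStarAlgebra A] [PartialOrder A]
    [StarOrderedRing A] {a b : A} (ha : IsSelfAdjoint a) (hb : IsSelfAdjoint b) :
    ‖a + b‖ ^ 2 ≤ 2 * ‖a ^ 2 + b ^ 2‖ := by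
  have hab : IsSelfAdjoint (a + b) := ha.add hb
  have h_nonneg : 0 ≤ (a + b) ^ 2 := by
    simpa only [hab.star_eq, sq] using star_mul_self_nonneg (a + b)
  have h_le : (a + b) ^ 2 ≤ 2 • (a ^ 2 + b ^ 2) := by
    rw [← sub_nonneg]
    convert star_mul_self_nonneg (a - b) using 1
    rw [star_sub, ha.star_eq, hb.star_eq]
    noncomm_ring
  calc ‖a + b‖ ^ 2 = ‖(a + b) ^ 2‖ := (hab.norm_pow_two_pow 1).symm
    _ ≤ ‖2 • (a ^ 2 + b ^ 2)‖ := CStarAlgebra.norm_le_norm_of_nonneg_of_le h_nonneg h_le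
    _ ≤ 2 * ‖a ^ 2 + b ^ 2‖ := by
      simpa only [Nat.cast_ofNat] using norm_nsmul_le (n := 2) (a := a ^ 2 + b ^ 2)

namespace ContinuousLinearMap

theorem opAbs_sq (B : H →L[ℂ] H) : opAbs B ^ 2 = adjoint B * B :=
  CFC.sq_sqrt _ (by simpa only [star_eq_adjoint] using star_mul_self_nonneg B)

theorem opAbs_adjoint_sq (B : H →L[ℂ] H) : opAbs (adjoint B) ^ 2 = B * adjoint B := by
  rw [opAbs_sq, adjoint_adjoint]

theorem norm_opAbs_sq_add_sq_le (B : H →L[ℂ] H) :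
    ‖opAbs B ^ 2 + opAbs (adjoint B) ^ 2‖ ^ 2
      ≤ 2 * ‖opAbs B ^ 4 + opAbs (adjoint B) ^ 4‖ := by
  have h4 : ∀ C : H →L[ℂ] H, C ^ 4 = (C ^ 2) ^ 2 := fun C => by rw [← pow_mul]
  rw [h4, h4, opAbs_sq, opAbs_adjoint_sq]
  refine IsSelfAdjoint.norm_add_sq_le ?_ ?_
  · simpa only [star_eq_adjoint] using IsSelfAdjoint.star_mul_self B
  · simpa only [star_eq_adjoint] using IsSelfAdjoint.mul_star_self B

theorem norm_apply_sq_add_norm_adjoint_apply_sq_le (B : H →L[ℂ] H) {x : H} (hx : ‖x‖ = 1) :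
    ‖B x‖ ^ 2 + ‖adjoint B x‖ ^ 2 ≤ ‖opAbs B ^ 2 + opAbs (adjoint B) ^ 2‖ := by
  have h := apply_norm_sq_eq_inner_adjoint_left (adjoint B) x
  rw [adjoint_adjoint] at h
  calc ‖B x‖ ^ 2 + ‖adjoint B x‖ ^ 2
      = (⟪(opAbs B ^ 2 + opAbs (adjoint B) ^ 2) x, x⟫_ℂ).re := by
        rw [apply_norm_sq_eq_inner_adjoint_left, h, opAbs_sq, opAbs_adjoint_sq, add_apply,
          inner_add_left, Complex.add_re]
        rfl
    _ ≤ ‖⟪(opAbs B ^ 2 + opAbs (adjoint B) ^ 2) x, x⟫_ℂ‖ := Complex.re_le_norm _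
    _ ≤ _ := norm_inner_apply_self_le_opNorm _ hx

theorem two_mul_norm_apply_mul_norm_adjoint_apply_le (B : H →L[ℂ] H) {x : H} (hx : ‖x‖ = 1) :
    2 * (‖B x‖ * ‖adjoint B x‖) ≤ ‖opAbs B ^ 2 + opAbs (adjoint B) ^ 2‖ := by
  nlinarith [norm_apply_sq_add_norm_adjoint_apply_sq_le B hx, sq_nonneg (‖B x‖ - ‖adjoint B x‖)]

theorem inner_sq_apply_self (B : H →L[ℂ] H) (x : H) :
    ⟪(B ^ 2) x, x⟫_ℂ = ⟪B x, adjoint B x⟫_ℂ :=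
  (adjoint_inner_right B (B x) x).symm

theorem numRadius_sq_le (B : H →L[ℂ] H) :
    numRadius (B ^ 2) ≤ ‖opAbs B ^ 2 + opAbs (adjoint B) ^ 2‖ / 2 := by
  refine numRadius_le_of_forall (by positivity) fun x hx => ?_
  have := two_mul_norm_apply_mul_norm_adjoint_apply_le B hx
  rw [inner_sq_apply_self]
  linarith [norm_inner_le_norm (𝕜 := ℂ) (B x) (adjoint B x)]

theorem norm_inner_apply_self_sq_le (B : H →L[ℂ] H) {x : H} (hx : ‖x‖ = 1) :
    ‖⟪B x, x⟫_ℂ‖ ^ 2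
      ≤ ‖opAbs B ^ 2 + opAbs (adjoint B) ^ 2‖ / 4 + numRadius (B ^ 2) / 2 := by
  have h := norm_inner_mul_inner_le_of_norm_eq_one (𝕜 := ℂ) (B x) (adjoint B x) hx
  rw [adjoint_inner_right, norm_mul, ← sq, ← inner_sq_apply_self] at h
  linarith [two_mul_norm_apply_mul_norm_adjoint_apply_le B hx,
    norm_inner_apply_self_le_numRadius (B ^ 2) hx]

theorem sq_numRadius_le (B : H →L[ℂ] H) :
    numRadius B ^ 2
      ≤ ‖opAbs B ^ 2 + opAbs (adjoint B) ^ 2‖ / 4 + numRadius (B ^ 2) / 2 := by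
  have hc : 0 ≤ ‖opAbs B ^ 2 + opAbs (adjoint B) ^ 2‖ / 4 + numRadius (B ^ 2) / 2 := by
    have := numRadius_nonneg (B ^ 2); positivity
  refine Real.le_sqrt (numRadius_nonneg B) hc |>.mp <| numRadius_le_of_forall (Real.sqrt_nonneg _)
    fun x hx => Real.le_sqrt (norm_nonneg _) hc |>.mpr <| norm_inner_apply_self_sq_le B hx

end ContinuousLinearMap

theorem stmt_13_general (B : H →L[ℂ] H) (α : ℝ) (hα0 : 0 ≤ α) :
    numRadius B ^ 4 ≤
      ((1 + α) / 8) * ‖opAbs B ^ 4 + opAbs (adjoint B) ^ 4‖ +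
        ((1 - α) / 4) * numRadius (B ^ 2) ^ 2 +
        (1 / 4) * ‖opAbs B ^ 2 + opAbs (adjoint B) ^ 2‖ * numRadius (B ^ 2) := by
  set w := numRadius B
  set v := numRadius (B ^ 2)
  set T := ‖opAbs B ^ 2 + opAbs (adjoint B) ^ 2‖
  set S := ‖opAbs B ^ 4 + opAbs (adjoint B) ^ 4‖
  have hv : 0 ≤ v := numRadius_nonneg _
  have hw2 : w ^ 2 ≤ T / 4 + v / 2 := sq_numRadius_le B
  have hvT : v ≤ T / 2 := numRadius_sq_le B
  have hTS : T ^ 2 ≤ 2 * S := norm_opAbs_sq_add_sq_le B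
  have hw4 : w ^ 4 ≤ (T / 4 + v / 2) ^ 2 := by
    rw [show w ^ 4 = (w ^ 2) ^ 2 by ring]; gcongr
  have hvS : 2 * v ^ 2 ≤ S := by nlinarith
  nlinarith [mul_nonneg hα0 (sub_nonneg.mpr hvS)]

theorem stmt_13 (B : H →L[ℂ] H) (α : ℝ) (hα0 : 0 ≤ α) (hα1 : α ≤ 1) :
    numRadius B ^ 4 ≤
      ((1 + α) / 8) * ‖opAbs B ^ 4 + opAbs (adjoint B) ^ 4‖ +
        ((1 - α) / 4) * numRadius (B ^ 2) ^ 2 +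
        (1 / 4) * ‖opAbs B ^ 2 + opAbs (adjoint B) ^ 2‖ * numRadius (B ^ 2) :=
  stmt_13_general B α hα0
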